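/- The Holevo quantity equals the mutual information for classical-record states: let A be the classical system with single test E, let 𝔅 be a test space with state space containing states β_e for each e ∈ E, let p be a probability distribution on E, and let ω be the state on the Foulis–Randall product of {E} with 𝔅 given by ω(e,f) = p(e)·β_e(f). Then I(A:B) := H(ω^A) + H(ω^B) − H(ω) = H(ω^B) − Σ_{e∈E} p(e) H(β_e), where ω^B = Σ_e p(e) β_e and all entropies are measurement entropies. -/

import Mathlib

/-- Local measurement entropy of a state `α` at a test `E` (base-2 logarithm). -/
noncomputable def locEnt {X : Type*} (E : Finset X) (α : X → ℝ) : ℝ :=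
  ∑ x ∈ E, -(α x * Real.logb 2 (α x))

/-- Measurement entropy: infimum of local entropies over all tests of the test space. -/
noncomputable def measEnt {X : Type*} (𝔄 : Set (Finset X)) (α : X → ℝ) : ℝ :=
  sInf ((fun E => locEnt E α) '' 𝔄)

/-- A state on a test space: nonnegative on outcomes, summing to 1 on every test. -/
def IsState {X : Type*} (𝔄 : Set (Finset X)) (α : X → ℝ) : Prop :=
  (∀ E ∈ 𝔄, ∀ x ∈ E, 0 ≤ α x) ∧ (∀ E ∈ 𝔄, ∑ x ∈ E, α x = 1)

/-- The Foulis–Randall product of the classical test space `{E}` with a test space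
`𝔅`: its tests are the two-stage tests `{(e,f) : e ∈ E, f ∈ F e}`, one for each
choice of a test `F e ∈ 𝔅` for every `e`. -/
def frProd {Xa Y : Type*} [DecidableEq Xa] [DecidableEq Y]
    (E : Finset Xa) (𝔅 : Set (Finset Y)) : Set (Finset (Xa × Y)) :=
  {T | ∃ F : Xa → Finset Y, (∀ e ∈ E, F e ∈ 𝔅) ∧
    T = E.biUnion fun e => (F e).image fun f => (e, f)}

/-! Since `ω(e,f) = p(e) β_e(f)`, the chain rule splits the local entropy of a two-stage test
`{(e,f) : f ∈ F_e}` as `H_E(p) + Σ_e p(e) H_{F_e}(β_e)`. The tests `F_e` are chosen independently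
and the weights `p(e)` are nonnegative, so the infimum over two-stage tests is
`H_E(p) + Σ_e p(e) H(β_e)`, i.e. `H(ω) = H(ω^A) + Σ_e p(e) H(β_e)`. -/

lemma isGLB_sum_mul_pi {ι α : Type*} [Nonempty α] {s : Finset ι} {A : Set α} {w : ι → ℝ}
    {g : ι → α → ℝ} {m : ι → ℝ} (hw : ∀ i ∈ s, 0 ≤ w i) (hm : ∀ i ∈ s, IsGLB (g i '' A) (m i)) :
    IsGLB ((fun F => ∑ i ∈ s, w i * g i (F i)) '' (s : Set ι).pi fun _ => A)
      (∑ i ∈ s, w i * m i) := by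
  refine ⟨?_, fun b hb => ?_⟩
  · rintro _ ⟨F, hF, rfl⟩
    exact Finset.sum_le_sum fun i hi =>
      mul_le_mul_of_nonneg_left ((hm i hi).1 ⟨F i, hF i hi, rfl⟩) (hw i hi)
  set W := ∑ i ∈ s, w i
  have hW : 0 ≤ W := Finset.sum_nonneg hw
  refine le_of_forall_pos_le_add fun ε hε => ?_
  -- approximate each infimum to within `δ`, so that the weighted error is `δ * W ≤ ε`
  set δ := ε / (W + 1)
  have hδ : 0 < δ := by positivity
  have hδW : δ * W ≤ ε := by
    rw [div_mul_eq_mul_div, div_le_iff₀ (by positivity)]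
    nlinarith
  have happrox : ∀ i ∈ s, ∃ a ∈ A, g i a < m i + δ := fun i hi => by
    obtain ⟨_, ⟨a, ha, rfl⟩, -, hlt⟩ := (hm i hi).exists_between (lt_add_of_pos_right _ hδ)
    exact ⟨a, ha, hlt⟩
  choose! F hFA hFlt using happrox
  calc b ≤ ∑ i ∈ s, w i * g i (F i) := hb ⟨F, hFA, rfl⟩
    _ ≤ ∑ i ∈ s, w i * (m i + δ) :=
        Finset.sum_le_sum fun i hi => mul_le_mul_of_nonneg_left (hFlt i hi).le (hw i hi)
    _ = ∑ i ∈ s, w i * m i + δ * W := by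
        rw [Finset.mul_sum, ← Finset.sum_add_distrib]
        exact Finset.sum_congr rfl fun i _ => by ring
    _ ≤ ∑ i ∈ s, w i * m i + ε := by linarith

lemma neg_mul_logb_mul (a b : ℝ) :
    -(a * b * Real.logb 2 (a * b)) =
      b * -(a * Real.logb 2 a) + a * -(b * Real.logb 2 b) := by
  rcases eq_or_ne a 0 with rfl | ha
  · simp
  rcases eq_or_ne b 0 with rfl | hb
  · simp
  rw [Real.logb_mul ha hb]
  ring

lemma locEnt_nonneg {X : Type*} {E : Finset X} {α : X → ℝ} (h0 : ∀ x ∈ E, 0 ≤ α x)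
    (h1 : ∑ x ∈ E, α x = 1) : 0 ≤ locEnt E α :=
  Finset.sum_nonneg fun x hx => by
    have hle : α x ≤ 1 := h1 ▸ Finset.single_le_sum h0 hx
    nlinarith [h0 x hx, Real.logb_nonpos one_lt_two (h0 x hx) hle]

lemma isGLB_measEnt {X : Type*} {𝔄 : Set (Finset X)} {α : X → ℝ} (h𝔄 : 𝔄.Nonempty)
    (hα : IsState 𝔄 α) : IsGLB ((fun E => locEnt E α) '' 𝔄) (measEnt 𝔄 α) :=
  isGLB_csInf (h𝔄.image _) ⟨0, by
    rintro _ ⟨E, hE, rfl⟩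
    exact locEnt_nonneg (hα.1 E hE) (hα.2 E hE)⟩

section TwoStage

variable {Xa Y : Type*} [DecidableEq Xa] [DecidableEq Y]

def twoStage (E : Finset Xa) (F : Xa → Finset Y) : Finset (Xa × Y) :=
  E.biUnion fun e => (F e).image fun f => (e, f)

lemma frProd_eq_image_twoStage (E : Finset Xa) (𝔅 : Set (Finset Y)) :
    frProd E 𝔅 = twoStage E '' (E : Set Xa).pi fun _ => 𝔅 := by
  ext T
  simp [frProd, twoStage, eq_comm]

lemma locEnt_twoStage {E : Finset Xa} {F : Xa → Finset Y} {p : Xa → ℝ} {β : Xa → Y → ℝ}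
    (hβ : ∀ e ∈ E, ∑ f ∈ F e, β e f = 1) :
    locEnt (twoStage E F) (fun x => p x.1 * β x.1 x.2) =
      locEnt E p + ∑ e ∈ E, p e * locEnt (F e) (β e) := by
  have hdisj : (E : Set Xa).PairwiseDisjoint fun e => (F e).image fun f => (e, f) := by
    intro e _ e' _ hne
    simp only [Function.onFun, Finset.disjoint_left, Finset.mem_image]
    rintro _ ⟨f, -, rfl⟩ ⟨f', -, hf'⟩
    exact hne (congrArg Prod.fst hf').symm
  rw [locEnt, twoStage, Finset.sum_biUnion hdisj, locEnt, ← Finset.sum_add_distrib]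
  refine Finset.sum_congr rfl fun e he => ?_
  rw [Finset.sum_image fun _ _ _ _ h => congrArg Prod.snd h]
  simp only [neg_mul_logb_mul, Finset.sum_add_distrib, ← Finset.sum_mul, ← Finset.mul_sum, hβ e he,
    one_mul, locEnt]

lemma measEnt_frProd {E : Finset Xa} {𝔅 : Set (Finset Y)} (h𝔅 : 𝔅.Nonempty) {p : Xa → ℝ}
    (hp : ∀ e ∈ E, 0 ≤ p e) {β : Xa → Y → ℝ} (hβ : ∀ e ∈ E, IsState 𝔅 (β e)) :
    measEnt (frProd E 𝔅) (fun x => p x.1 * β x.1 x.2) =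
      locEnt E p + ∑ e ∈ E, p e * measEnt 𝔅 (β e) := by
  set S := (fun F => ∑ e ∈ E, p e * locEnt (F e) (β e)) '' (E : Set Xa).pi fun _ => 𝔅
  have hS : IsGLB S (∑ e ∈ E, p e * measEnt 𝔅 (β e)) :=
    isGLB_sum_mul_pi hp fun e he => isGLB_measEnt h𝔅 (hβ e he)
  have himage : (fun T => locEnt T fun x => p x.1 * β x.1 x.2) '' frProd E 𝔅 =
      OrderIso.addLeft (locEnt E p) '' S := by
    rw [frProd_eq_image_twoStage, Set.image_image, Set.image_image]
    exact Set.image_congr fun F hF => locEnt_twoStage fun e he => (hβ e he).2 _ (hF e he)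
  obtain ⟨B, hB⟩ := h𝔅
  have hSne : S.Nonempty := ⟨_, fun _ => B, fun _ _ => hB, rfl⟩
  rw [measEnt, himage]
  exact ((OrderIso.addLeft _).isGLB_image'.2 hS).csInf_eq (hSne.image _)

end TwoStage

theorem holevo_quantity_eq_mutual_information_general {Xa Y : Type*}
    [DecidableEq Xa] [DecidableEq Y]
    (E : Finset Xa) (𝔅 : Set (Finset Y)) (h𝔅 : 𝔅.Nonempty)
    (p : Xa → ℝ) (hp : ∀ e ∈ E, 0 ≤ p e)
    (β : Xa → Y → ℝ) (hβ : ∀ e ∈ E, IsState 𝔅 (β e))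
    (ω : Xa × Y → ℝ) (hω : ∀ x : Xa × Y, ω x = p x.1 * β x.1 x.2)
    (ωB : Y → ℝ) :
    locEnt E p + measEnt 𝔅 ωB - measEnt (frProd E 𝔅) ω =
      measEnt 𝔅 ωB - ∑ e ∈ E, p e * measEnt 𝔅 (β e) := by
  obtain rfl : ω = fun x => p x.1 * β x.1 x.2 := funext hω
  rw [measEnt_frProd h𝔅 hp hβ]
  ring

/-- for a classical-record state ω(e,f) = p(e)·β_e(f), the mutual
information I(A:B) = H(A) + H(B) − H(AB) equals the Holevo quantity
H(ω^B) − Σ_e p(e) H(β_e). -/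
theorem holevo_quantity_eq_mutual_information {Xa Y : Type*}
    [DecidableEq Xa] [DecidableEq Y]
    (E : Finset Xa) (𝔅 : Set (Finset Y)) (h𝔅 : 𝔅.Nonempty)
    (p : Xa → ℝ) (hp : ∀ e ∈ E, 0 ≤ p e) (hpsum : ∑ e ∈ E, p e = 1)
    (β : Xa → Y → ℝ) (hβ : ∀ e ∈ E, IsState 𝔅 (β e))
    (ω : Xa × Y → ℝ) (hω : ∀ x : Xa × Y, ω x = p x.1 * β x.1 x.2)
    (ωB : Y → ℝ) (hωB : ∀ f, ωB f = ∑ e ∈ E, p e * β e f) :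
    locEnt E p + measEnt 𝔅 ωB - measEnt (frProd E 𝔅) ω =
      measEnt 𝔅 ωB - ∑ e ∈ E, p e * measEnt 𝔅 (β e) :=
  holevo_quantity_eq_mutual_information_general E 𝔅 h𝔅 p hp β hβ ω hω ωB
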